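/- The influence function is submodular: for any subsets S ⊆ T of billboard slots and any slot b ∉ T, I(S ∪ {b}) − I(S) ≥ I(T ∪ {b}) − I(T). -/

import Mathlib

open Finset

noncomputable def infl {B T : Type} (D : Finset T) (Pr : B → T → ℝ) (S : Finset B) : ℝ :=
  ∑ t ∈ D, (1 - ∏ b ∈ S, (1 - Pr b t))

/-! The marginal gain of a slot `b` on a trajectory `t` is `Pr b t` times the probability
`∏ x ∈ S, (1 - Pr x t)` that `S` misses `t`; the latter can only shrink as `S` grows. -/

theorem infl_insert_sub_infl {B T : Type} [DecidableEq B] (D : Finset T) (Pr : B → T → ℝ)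
    {S : Finset B} {b : B} (hb : b ∉ S) :
    infl D Pr (insert b S) - infl D Pr S = ∑ t ∈ D, Pr b t * ∏ x ∈ S, (1 - Pr x t) := by
  unfold infl
  rw [← sum_sub_distrib]
  refine sum_congr rfl fun t _ => ?_
  rw [prod_insert hb]
  ring

theorem infl_submodular {B T : Type} [DecidableEq B] (D : Finset T) (Pr : B → T → ℝ)
    (hPr : ∀ b t, 0 ≤ Pr b t ∧ Pr b t ≤ 1)
    {S T' : Finset B} (hST : S ⊆ T') {b : B} (hb : b ∉ T') :
    infl D Pr (insert b T') - infl D Pr T' ≤ infl D Pr (insert b S) - infl D Pr S := by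
  rw [infl_insert_sub_infl D Pr hb, infl_insert_sub_infl D Pr fun h => hb (hST h)]
  refine sum_le_sum fun t _ => mul_le_mul_of_nonneg_left ?_ (hPr b t).1
  exact prod_anti_set_of_le_one (fun x => sub_nonneg.2 (hPr x t).2)
    (fun x => sub_le_self 1 (hPr x t).1) hST
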